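/- arXiv:0903.4995 — 5 statements merged into one kernel-verified Lean document; each statement's English description precedes it below -/
import Mathlib

section
/- For the full Hénon–Heiles potential V(x,y) = (x² + y²)/2 + x²y − y³/3 and α = 1/√3, defining F(x) = (√3/8) x² (x + √3) and G(x,y) = (3/8)(1 − √3 x − y), one has V(x,y) = F(x + αy) + (αx − y)² G(x,y) for all (x,y) ∈ ℝ². -/
theorem henon_heiles_decomposition :
    ∀ x y : ℝ,
      (x ^ 2 + y ^ 2) / 2 + x ^ 2 * y - y ^ 3 / 3 =
        (Real.sqrt 3 / 8) * (x + y / Real.sqrt 3) ^ 2 *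
            ((x + y / Real.sqrt 3) + Real.sqrt 3) +
          (x / Real.sqrt 3 - y) ^ 2 * ((3 : ℝ) / 8 * (1 - Real.sqrt 3 * x - y)) := by
  intro x y
  have h3 : Real.sqrt 3 ^ 2 = 3 := Real.sq_sqrt (by norm_num)
  have h4 : Real.sqrt 3 ^ 3 = 3 * Real.sqrt 3 := by
    rw [pow_succ, h3]
  have h5 : Real.sqrt 3 ^ 4 = 9 := by
    rw [show (4:ℕ) = 2*2 from rfl, pow_mul, h3]; norm_num
  have hne : Real.sqrt 3 ≠ 0 := by positivity
  field_simp
  ring_nf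
  rw [h3, h4, h5]
  ring
end

section
/- Let U⁽²⁾(x,y) = (9x⁴ + 8x³y + 5y⁴)/(x² + y²) (defined for (x,y) ≠ 0). Then the SLO condition α ∂_x U(x, αx) − ∂_y U(x, αx) = 0 for all x ≠ 0 is equivalent to (2 − α)(5α − 1)(1 + α) = 0, so the slope spectrum is {2, −1, 1/5}. -/
/-!
By the quotient rule both partial derivatives of `U₂` are explicit rational functions. On the
line `y = α x` the SLO combination `α ∂ₓU₂ - ∂ᵧU₂` is homogeneous of degree one in `x`, namely
`x * 4 (2 - α)(5α - 1)(1 + α) / (1 + α²)`, so for `x ≠ 0` it vanishes exactly when `α` is a root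
of the cubic.
-/

noncomputable def U₂ (x y : ℝ) : ℝ := (9 * x ^ 4 + 8 * x ^ 3 * y + 5 * y ^ 4) / (x ^ 2 + y ^ 2)

/-- `α ∂ₓU(x, αx) - ∂ᵧU(x, αx)`: it vanishes iff `∇U(x, αx)` is parallel to `(1, α)`. -/
noncomputable def sloDefect (U : ℝ → ℝ → ℝ) (α x : ℝ) : ℝ :=
  α * deriv (fun t => U t (α * x)) x - deriv (fun t => U x t) (α * x)

lemma hasDerivAt_U₂_fst {x y : ℝ} (h : x ^ 2 + y ^ 2 ≠ 0) :
    HasDerivAt (fun t => U₂ t y)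
      (((36 * x ^ 3 + 24 * x ^ 2 * y) * (x ^ 2 + y ^ 2) -
          (9 * x ^ 4 + 8 * x ^ 3 * y + 5 * y ^ 4) * (2 * x)) / (x ^ 2 + y ^ 2) ^ 2) x := by
  have hnum : HasDerivAt (fun t => 9 * t ^ 4 + 8 * t ^ 3 * y + 5 * y ^ 4)
      (36 * x ^ 3 + 24 * x ^ 2 * y) x :=
    ((((hasDerivAt_pow 4 x).const_mul 9).add
      (((hasDerivAt_pow 3 x).const_mul 8).mul_const y)).add_const _).congr_deriv (by push_cast; ring)
  have hden : HasDerivAt (fun t => t ^ 2 + y ^ 2) (2 * x) x :=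
    ((hasDerivAt_pow 2 x).add_const _).congr_deriv (by push_cast; ring)
  exact hnum.div hden h

lemma hasDerivAt_U₂_snd {x y : ℝ} (h : x ^ 2 + y ^ 2 ≠ 0) :
    HasDerivAt (fun t => U₂ x t)
      (((8 * x ^ 3 + 20 * y ^ 3) * (x ^ 2 + y ^ 2) -
          (9 * x ^ 4 + 8 * x ^ 3 * y + 5 * y ^ 4) * (2 * y)) / (x ^ 2 + y ^ 2) ^ 2) y := by
  have hnum : HasDerivAt (fun t => 9 * x ^ 4 + 8 * x ^ 3 * t + 5 * t ^ 4)
      (8 * x ^ 3 + 20 * y ^ 3) y :=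
    ((((hasDerivAt_id y).const_mul _).const_add _).add ((hasDerivAt_pow 4 y).const_mul 5)).congr_deriv
      (by push_cast; ring)
  have hden : HasDerivAt (fun t => x ^ 2 + t ^ 2) (2 * y) y :=
    ((hasDerivAt_pow 2 y).const_add _).congr_deriv (by push_cast; ring)
  exact hnum.div hden h

lemma sloDefect_U₂ (α : ℝ) {x : ℝ} (hx : x ≠ 0) :
    sloDefect U₂ α x = x * (4 * ((2 - α) * (5 * α - 1) * (1 + α)) / (1 + α ^ 2)) := by
  have hden : x ^ 2 + (α * x) ^ 2 ≠ 0 := by positivity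
  have hα : 1 + α ^ 2 ≠ 0 := by positivity
  rw [sloDefect, (hasDerivAt_U₂_fst hden).deriv, (hasDerivAt_U₂_snd hden).deriv]
  field_simp
  ring

lemma sloDefect_U₂_eq_zero_iff (α : ℝ) {x : ℝ} (hx : x ≠ 0) :
    sloDefect U₂ α x = 0 ↔ (2 - α) * (5 * α - 1) * (1 + α) = 0 := by
  have hα : 1 + α ^ 2 ≠ 0 := by positivity
  simp [sloDefect_U₂ α hx, hx, hα]

lemma slope_cubic_eq_zero_iff (α : ℝ) :
    (2 - α) * (5 * α - 1) * (1 + α) = 0 ↔ α = 2 ∨ α = -1 ∨ α = 1 / 5 := by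
  simp only [mul_eq_zero, sub_eq_zero]
  constructor
  · rintro ((h | h) | h)
    · exact Or.inl h.symm
    · exact Or.inr (Or.inr (by linarith))
    · exact Or.inr (Or.inl (by linarith))
  · rintro (rfl | rfl | rfl) <;> norm_num

theorem nonpolynomial_slope_spectrum (α : ℝ) :
    let U : ℝ → ℝ → ℝ := fun x y => (9 * x ^ 4 + 8 * x ^ 3 * y + 5 * y ^ 4) / (x ^ 2 + y ^ 2)
    ((∀ x : ℝ, x ≠ 0 →
        α * deriv (fun t => U t (α * x)) x - deriv (fun t => U x t) (α * x) = 0) ↔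
      (2 - α) * (5 * α - 1) * (1 + α) = 0) ∧
    ((2 - α) * (5 * α - 1) * (1 + α) = 0 ↔ (α = 2 ∨ α = -1 ∨ α = 1 / 5)) :=
  ⟨⟨fun h => (sloDefect_U₂_eq_zero_iff α one_ne_zero).1 (h 1 one_ne_zero),
    fun h x hx => (sloDefect_U₂_eq_zero_iff α hx).2 h⟩, slope_cubic_eq_zero_iff α⟩
end

section
/- For the 3D potential V(x,y,z) = (x²+y²+z²)/2 + (x²+z²)y − (y³ + z³)/3, the unit slope vectors s ∝ (1, α, β) satisfying ∇V(sx) ∥ s for all x are exactly those with (α, β) ∈ {(1/√3, 0), (−1/√3, 0)}. -/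
/-!
Along the line `t ↦ (t, αt, βt)` the quadratic part of `V` has gradient parallel to the line, and
the cubic part gives `∂_y V - α ∂_x V = (1 + β² - 3α²) t²` and `∂_z V - β ∂_x V = -β² t²`.
So the gradient is parallel to `(1, α, β)` everywhere on the line exactly when `β = 0` and `3α² = 1`.
-/

noncomputable def hh3dPotential (x y z : ℝ) : ℝ :=
  (x ^ 2 + y ^ 2 + z ^ 2) / 2 + (x ^ 2 + z ^ 2) * y - (y ^ 3 + z ^ 3) / 3

theorem hasDerivAt_hh3dPotential_fst (x y z : ℝ) :
    HasDerivAt (fun t => hh3dPotential t y z) (x + 2 * x * y) x :=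
  ((((((hasDerivAt_pow 2 x).add_const (y ^ 2)).add_const (z ^ 2)).div_const 2).add
    (((hasDerivAt_pow 2 x).add_const (z ^ 2)).mul_const y)).sub_const
      ((y ^ 3 + z ^ 3) / 3)).congr_deriv (by ring)

theorem hasDerivAt_hh3dPotential_snd (x y z : ℝ) :
    HasDerivAt (fun t => hh3dPotential x t z) (y + x ^ 2 + z ^ 2 - y ^ 2) y :=
  ((((((hasDerivAt_pow 2 y).const_add (x ^ 2)).add_const (z ^ 2)).div_const 2).add
    ((hasDerivAt_id y).const_mul (x ^ 2 + z ^ 2))).sub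
    (((hasDerivAt_pow 3 y).add_const (z ^ 3)).div_const 3)).congr_deriv (by ring)

theorem hasDerivAt_hh3dPotential_thd (x y z : ℝ) :
    HasDerivAt (fun t => hh3dPotential x y t) (z + 2 * z * y - z ^ 2) z :=
  ((((((hasDerivAt_pow 2 z).const_add (x ^ 2 + y ^ 2)).div_const 2).add
    (((hasDerivAt_pow 2 z).const_add (x ^ 2)).mul_const y)).sub
    (((hasDerivAt_pow 3 z).const_add (y ^ 3)).div_const 3))).congr_deriv (by ring)

theorem exists_mul_eq_iff_forall {X R : Type*} [Mul R] (a b c : X → R) (α β : R) :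
    (∃ lam : X → R, ∀ x, a x = lam x ∧ b x = lam x * α ∧ c x = lam x * β) ↔
      ∀ x, b x = a x * α ∧ c x = a x * β :=
  ⟨fun ⟨lam, h⟩ x => by obtain ⟨ha, hb, hc⟩ := h x; rw [ha]; exact ⟨hb, hc⟩,
    fun h => ⟨a, fun x => ⟨rfl, h x⟩⟩⟩

theorem hh3dPotential_gradient_parallel_iff (α β : ℝ) :
    (∀ x : ℝ,
      deriv (fun t => hh3dPotential x t (β * x)) (α * x) =
          deriv (fun t => hh3dPotential t (α * x) (β * x)) x * α ∧
        deriv (fun t => hh3dPotential x (α * x) t) (β * x) =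
          deriv (fun t => hh3dPotential t (α * x) (β * x)) x * β) ↔
      β = 0 ∧ 3 * α ^ 2 = 1 := by
  simp only [(hasDerivAt_hh3dPotential_fst _ _ _).deriv, (hasDerivAt_hh3dPotential_snd _ _ _).deriv,
    (hasDerivAt_hh3dPotential_thd _ _ _).deriv]
  constructor
  · intro h
    obtain ⟨hy, hz⟩ := h 1
    obtain rfl : β = 0 := pow_eq_zero_iff two_ne_zero |>.mp (by linear_combination -hz)
    exact ⟨rfl, by linear_combination -hy⟩
  · rintro ⟨rfl, hα⟩ x
    exact ⟨by linear_combination (-x ^ 2) * hα, by ring⟩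

theorem three_mul_sq_eq_one_iff (α : ℝ) :
    3 * α ^ 2 = 1 ↔ α = 1 / √3 ∨ α = -(1 / √3) := by
  rw [← sq_eq_sq_iff_eq_or_eq_neg, div_pow, Real.sq_sqrt (by norm_num)]
  constructor <;> intro h <;> linarith

theorem hh3d_slope_spectrum (α β : ℝ) :
    let V : ℝ → ℝ → ℝ → ℝ := fun x y z =>
      (x ^ 2 + y ^ 2 + z ^ 2) / 2 + (x ^ 2 + z ^ 2) * y - (y ^ 3 + z ^ 3) / 3
    (∃ lam : ℝ → ℝ, ∀ x : ℝ,
        deriv (fun t => V t (α * x) (β * x)) x = lam x ∧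
        deriv (fun t => V x t (β * x)) (α * x) = lam x * α ∧
        deriv (fun t => V x (α * x) t) (β * x) = lam x * β) ↔
      ((α = 1 / Real.sqrt 3 ∧ β = 0) ∨ (α = -(1 / Real.sqrt 3) ∧ β = 0)) := by
  intro V
  have hV : V = hh3dPotential := rfl
  rw [hV, exists_mul_eq_iff_forall, hh3dPotential_gradient_parallel_iff, three_mul_sq_eq_one_iff]
  tauto
end

section
/- For the 3D potential V(x,y,z) = (x²+y²+z²)/2 + x³ + y³ + z³ + xyz, the set of (α, β) ∈ ℝ² such that ∇V(x, αx, βx) is parallel to (1, α, β) for all x ∈ ℝ equals {(0,0), (1/2, 1), (1, 1/2), (1, 1), (2, 2)}. -/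
/-!
Along the line `(x, αx, βx)` every partial derivative of `V` is `x` times a linear term plus `x²`
times a constant, so `∇V ∥ (1, α, β)` for all `x` reduces to two polynomial equations in
`(α, β)`; the factor is then `λ x = x + (3 + αβ) x²`. Subtracting the equations factors off
`α - β`: on the diagonal they become `α (α - 1) (α - 2) = 0`, and off it `α + β = 3/2`,
`αβ = 1/2`, whose roots are `1` and `1/2`.
-/

noncomputable def cubicPotential (x y z : ℝ) : ℝ :=
  (x ^ 2 + y ^ 2 + z ^ 2) / 2 + x ^ 3 + y ^ 3 + z ^ 3 + x * y * z

lemma deriv_sq_div_two_add_cube (k c x : ℝ) :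
    deriv (fun t : ℝ => t ^ 2 / 2 + t ^ 3 + k * t + c) x = x + 3 * x ^ 2 + k := by
  have h : HasDerivAt (fun t : ℝ => t ^ 2 / 2 + t ^ 3 + k * t + c)
      (2 * x ^ 1 / 2 + 3 * x ^ 2 + k * 1) x :=
    ((((hasDerivAt_pow 2 x).div_const 2).add (hasDerivAt_pow 3 x)).add
      ((hasDerivAt_id x).const_mul k)).add_const c
  rw [h.deriv]
  ring

lemma deriv_cubicPotential_fst (x y z : ℝ) :
    deriv (fun t => cubicPotential t y z) x = x + 3 * x ^ 2 + y * z := by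
  have h : (fun t => cubicPotential t y z) =
      fun t => t ^ 2 / 2 + t ^ 3 + (y * z) * t + ((y ^ 2 + z ^ 2) / 2 + y ^ 3 + z ^ 3) := by
    funext t; unfold cubicPotential; ring
  rw [h, deriv_sq_div_two_add_cube]

lemma deriv_cubicPotential_snd (x y z : ℝ) :
    deriv (fun t => cubicPotential x t z) y = y + 3 * y ^ 2 + x * z := by
  have h : (fun t => cubicPotential x t z) =
      fun t => t ^ 2 / 2 + t ^ 3 + (x * z) * t + ((x ^ 2 + z ^ 2) / 2 + x ^ 3 + z ^ 3) := by
    funext t; unfold cubicPotential; ring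
  rw [h, deriv_sq_div_two_add_cube]

lemma deriv_cubicPotential_thd (x y z : ℝ) :
    deriv (fun t => cubicPotential x y t) z = z + 3 * z ^ 2 + x * y := by
  have h : (fun t => cubicPotential x y t) =
      fun t => t ^ 2 / 2 + t ^ 3 + (x * y) * t + ((x ^ 2 + y ^ 2) / 2 + x ^ 3 + y ^ 3) := by
    funext t; unfold cubicPotential; ring
  rw [h, deriv_sq_div_two_add_cube]

lemma exists_gradient_parallel_iff (α β : ℝ) :
    (∃ lam : ℝ → ℝ, ∀ x : ℝ,
        deriv (fun t => cubicPotential t (α * x) (β * x)) x = lam x ∧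
        deriv (fun t => cubicPotential x t (β * x)) (α * x) = lam x * α ∧
        deriv (fun t => cubicPotential x (α * x) t) (β * x) = lam x * β) ↔
      3 * α ^ 2 + β = α * (3 + α * β) ∧ 3 * β ^ 2 + α = β * (3 + α * β) := by
  simp only [deriv_cubicPotential_fst, deriv_cubicPotential_snd, deriv_cubicPotential_thd]
  constructor
  · rintro ⟨lam, h⟩
    obtain ⟨hx, hy, hz⟩ := h 1
    exact ⟨by linear_combination hy - α * hx, by linear_combination hz - β * hx⟩
  · rintro ⟨hα, hβ⟩
    exact ⟨fun x => x + (3 + α * β) * x ^ 2, fun x =>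
      ⟨by ring, by linear_combination x ^ 2 * hα, by linear_combination x ^ 2 * hβ⟩⟩

lemma slope_equations_iff (α β : ℝ) :
    (3 * α ^ 2 + β = α * (3 + α * β) ∧ 3 * β ^ 2 + α = β * (3 + α * β)) ↔
      ((α = 0 ∧ β = 0) ∨ (α = 1 / 2 ∧ β = 1) ∨ (α = 1 ∧ β = 1 / 2) ∨
        (α = 1 ∧ β = 1) ∨ (α = 2 ∧ β = 2)) := by
  constructor
  · rintro ⟨hα, hβ⟩
    have hfactor : (α - β) * (3 * α + 3 * β - 4 - α * β) = 0 := by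
      linear_combination hα - hβ
    rcases mul_eq_zero.mp hfactor with hdiag | hoff
    · obtain rfl : α = β := by linarith
      have hroots : α * (α - 1) * (α - 2) = 0 := by linear_combination -hα
      rcases mul_eq_zero.mp hroots with h | h
      · rcases mul_eq_zero.mp h with h | h
        · exact Or.inl ⟨h, h⟩
        · obtain rfl : α = 1 := by linarith
          norm_num
      · obtain rfl : α = 2 := by linarith
        norm_num
    · have hsum_eq : α + β = 3 * (α * β) := by linear_combination hα - α * hoff
      have hprod : α * β = 1 / 2 := by linear_combination -(3 * hsum_eq - hoff) / 8
      have hsum : α + β = 3 / 2 := by linear_combination hsum_eq + 3 * hprod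
      have hroots : (α - 1) * (2 * α - 1) = 0 := by
        linear_combination 2 * α * hsum - 2 * hprod
      rcases mul_eq_zero.mp hroots with h | h
      · obtain rfl : α = 1 := by linarith
        obtain rfl : β = 1 / 2 := by linarith
        norm_num
      · obtain rfl : α = 1 / 2 := by linarith
        obtain rfl : β = 1 := by linarith
        norm_num
  · rintro (⟨rfl, rfl⟩ | ⟨rfl, rfl⟩ | ⟨rfl, rfl⟩ | ⟨rfl, rfl⟩ | ⟨rfl, rfl⟩) <;> norm_num

theorem cubic3d_slope_spectrum (α β : ℝ) :
    let V : ℝ → ℝ → ℝ → ℝ := fun x y z =>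
      (x ^ 2 + y ^ 2 + z ^ 2) / 2 + x ^ 3 + y ^ 3 + z ^ 3 + x * y * z
    (∃ lam : ℝ → ℝ, ∀ x : ℝ,
        deriv (fun t => V t (α * x) (β * x)) x = lam x ∧
        deriv (fun t => V x t (β * x)) (α * x) = lam x * α ∧
        deriv (fun t => V x (α * x) t) (β * x) = lam x * β) ↔
      ((α = 0 ∧ β = 0) ∨ (α = 1 / 2 ∧ β = 1) ∨ (α = 1 ∧ β = 1 / 2) ∨
        (α = 1 ∧ β = 1) ∨ (α = 2 ∧ β = 2)) :=
  (exists_gradient_parallel_iff α β).trans (slope_equations_iff α β)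
end

section
/- Fix α, β ∈ ℝ with α ≠ 0. The cubic potential U(x,y,z) = ((1 − 2β² − 2α²)/(3α)) x³ + y x² + (β/α) x² z satisfies the SLO condition along the line (x, αx, βx): i.e., ∇U(x, αx, βx) is parallel to (1, α, β) for all x ∈ ℝ. -/
section CubicPartials

variable (a c : ℝ)

theorem hasDerivAt_cubic_partial_x (y z x : ℝ) :
    HasDerivAt (fun t => a * t ^ 3 + y * t ^ 2 + c * t ^ 2 * z)
      (3 * a * x ^ 2 + 2 * x * y + 2 * c * x * z) x := by
  have h : HasDerivAt (fun t => a * t ^ 3 + y * t ^ 2 + c * t ^ 2 * z) _ x :=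
    (((hasDerivAt_pow 3 x).const_mul a).add ((hasDerivAt_pow 2 x).const_mul y)).add
      (((hasDerivAt_pow 2 x).const_mul c).mul_const z)
  exact h.congr_deriv (by norm_num; ring)

theorem hasDerivAt_cubic_partial_y (x z y : ℝ) :
    HasDerivAt (fun t => a * x ^ 3 + t * x ^ 2 + c * x ^ 2 * z) (x ^ 2) y := by
  simpa using ((hasDerivAt_id y).mul_const (x ^ 2)).const_add (a * x ^ 3) |>.add_const
    (c * x ^ 2 * z)

theorem hasDerivAt_cubic_partial_z (x y z : ℝ) :
    HasDerivAt (fun t => a * x ^ 3 + y * x ^ 2 + c * x ^ 2 * t) (c * x ^ 2) z := by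
  simpa using ((hasDerivAt_id z).const_mul (c * x ^ 2)).const_add (a * x ^ 3 + y * x ^ 2)

end CubicPartials

theorem inverse_cubic_slo (α β : ℝ) (hα : α ≠ 0) :
    let U : ℝ → ℝ → ℝ → ℝ := fun x y z =>
      ((1 - 2 * β ^ 2 - 2 * α ^ 2) / (3 * α)) * x ^ 3 + y * x ^ 2 + (β / α) * x ^ 2 * z
    ∃ lam : ℝ → ℝ, ∀ x : ℝ,
      deriv (fun t => U t (α * x) (β * x)) x = lam x ∧
      deriv (fun t => U x t (β * x)) (α * x) = lam x * α ∧
      deriv (fun t => U x (α * x) t) (β * x) = lam x * β := by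
  intro U
  -- `∂_y U = x²` on the line forces the multiplier `x² / α`; the `x³`-coefficient `a` is chosen
  -- so that `∂_x U = (3a + 2α + 2β²/α) x²` equals it as well.
  refine ⟨fun x => x ^ 2 / α, fun x => ⟨?_, ?_, ?_⟩⟩
  · rw [(hasDerivAt_cubic_partial_x _ _ _ _ x).deriv]
    field_simp
    ring
  · rw [(hasDerivAt_cubic_partial_y _ _ x _ _).deriv]
    field_simp
  · rw [(hasDerivAt_cubic_partial_z _ _ x _ _).deriv]
    field_simp
end
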